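/- Let λ ≥ 0 be real, x₀ ∈ (0,1), K > 0, and j a natural number. Let v : (0,x₀] → ℝ be twice continuously differentiable and bounded, and suppose (1/2)x²v''(x) + x v'(x) − (1+λ)v(x) = F(x) on (0,x₀], where F is continuous and |F(x)| ≤ K x^{m̄(λ)} (1 − log x)^j for all x ∈ (0,x₀]. Then there is a constant C′ such that |v(x)| ≤ C′ x^{m̄(λ)} (1 − log x)^{j+1} for all x ∈ (0,x₀]. -/

import Mathlib

/-- The indicial root `m̄(λ) = (-1 + √(9+8λ))/2`. -/
noncomputable def mUp (lam : ℝ) : ℝ := (-1 + Real.sqrt (9 + 8 * lam)) / 2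

/-- The indicial root `m̲(λ) = (-1 - √(9+8λ))/2`. -/
noncomputable def mDown (lam : ℝ) : ℝ := (-1 - Real.sqrt (9 + 8 * lam)) / 2

/-!
The proof is a comparison principle for the Euler operator
`L y = x² y''/2 + x y' - (1 + λ) y` on `(0, x₀]`. A bounded subsolution lies below a
supersolution: adding `ε x ^ m̲(λ)`, a positive solution that blows up at `0`, makes the
difference nonnegative near `0`, and a negative interior minimum would give `L > 0` there.
Since `m̄(λ)` is an indicial root, applying `L` to `x ^ m̄ (T - log x) ^ (j + 1)` only
differentiates the logarithm, giving roughly `-(j + 1)(m̄ + 1/2) x ^ m̄ (T - log x) ^ j`: the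
resonance costs exactly one power of the logarithm. A large multiple of this function is
therefore a supersolution dominating `±v`.
-/

open Real Set Filter Topology

theorem IsLocalMin.deriv_deriv_nonneg {f : ℝ → ℝ} {c : ℝ} (h : IsLocalMin f c)
    (hc : ContinuousAt f c) : 0 ≤ deriv (deriv f) c := by
  by_contra! hneg
  -- The second-derivative test makes `c` a local maximum too, so `f` is locally constant.
  have hmax : IsLocalMax f c := isLocalMax_of_deriv_deriv_neg hneg h.deriv_eq_zero hc
  have hconst : f =ᶠ[𝓝 c] fun _ => f c := by
    filter_upwards [h, hmax] with x hmin hmax using le_antisymm hmax hmin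
  have hderiv : deriv f =ᶠ[𝓝 c] fun _ => 0 := by
    filter_upwards [hconst.eventuallyEq_nhds] with x hx
    rw [hx.deriv_eq, deriv_const]
  rw [hderiv.deriv_eq, deriv_const] at hneg
  exact lt_irrefl 0 hneg

theorem IsLocalMin.eq_zero_and_nonneg_of_hasDerivAt {f f' : ℝ → ℝ} {f'' c : ℝ}
    (h : IsLocalMin f c) (hf : ∀ᶠ x in 𝓝 c, HasDerivAt f (f' x) x)
    (hf' : HasDerivAt f' f'' c) : f' c = 0 ∧ 0 ≤ f'' := by
  have hderiv : deriv f =ᶠ[𝓝 c] f' := hf.mono fun x hx => hx.deriv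
  refine ⟨hderiv.self_of_nhds ▸ h.deriv_eq_zero, ?_⟩
  have := h.deriv_deriv_nonneg hf.self_of_nhds.continuousAt
  rwa [hderiv.deriv_eq, hf'.deriv] at this

theorem nonneg_of_secondOrderOp_nonpos {w w' w'' a₂ a₁ a₀ : ℝ → ℝ} {a b : ℝ}
    (hw : ∀ x ∈ Ioo a b, HasDerivAt w (w' x) x) (hw' : ∀ x ∈ Ioo a b, HasDerivAt w' (w'' x) x)
    (hcont : ContinuousOn w (Ioc a b)) (ha₂ : ∀ x ∈ Ioo a b, 0 ≤ a₂ x)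
    (ha₀ : ∀ x ∈ Ioo a b, 0 < a₀ x)
    (hL : ∀ x ∈ Ioo a b, a₂ x * w'' x + a₁ x * w' x - a₀ x * w x ≤ 0)
    (hleft : ∀ᶠ x in 𝓝[>] a, 0 ≤ w x) (hright : 0 ≤ w b) :
    ∀ x ∈ Ioc a b, 0 ≤ w x := by
  intro x hx
  by_contra! hwx
  obtain ⟨δ, hδw, hδ⟩ := (hleft.and (Ioo_mem_nhdsGT hx.1)).exists
  have hδb : δ ≤ b := hδ.2.le.trans hx.2
  obtain ⟨c, hc, hmin⟩ := isCompact_Icc.exists_isMinOn (nonempty_Icc.2 hδb)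
    (hcont.mono fun y hy => ⟨hδ.1.trans_le hy.1, hy.2⟩)
  have hwc : w c < 0 := (hmin ⟨hδ.2.le, hx.2⟩).trans_lt hwx
  have hδc : δ < c := hc.1.lt_of_ne (by rintro rfl; linarith)
  have hcb : c < b := hc.2.lt_of_ne (by rintro rfl; linarith)
  have hcI : c ∈ Ioo a b := ⟨hδ.1.trans hδc, hcb⟩
  have hloc : IsLocalMin w c := hmin.isLocalMin (Icc_mem_nhds hδc hcb)
  obtain ⟨hw'c, hw''c⟩ := hloc.eq_zero_and_nonneg_of_hasDerivAt
    (eventually_of_mem (isOpen_Ioo.mem_nhds hcI) hw) (hw' c hcI)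
  have hLc := hL c hcI
  rw [hw'c] at hLc
  nlinarith [ha₂ c hcI, ha₀ c hcI]

noncomputable def eulerOp (lam x y y' y'' : ℝ) : ℝ := 1 / 2 * x ^ 2 * y'' + x * y' - (1 + lam) * y

theorem eulerOp_const_mul (lam x c y y' y'' : ℝ) :
    eulerOp lam x (c * y) (c * y') (c * y'') = c * eulerOp lam x y y' y'' := by
  unfold eulerOp; ring

theorem eulerOp_neg (lam x y y' y'' : ℝ) :
    eulerOp lam x (-y) (-y') (-y'') = -eulerOp lam x y y' y'' := by
  unfold eulerOp; ring

noncomputable def logWeight (T p : ℝ) (k : ℕ) (x : ℝ) : ℝ := x ^ p * (T - log x) ^ k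

noncomputable def logWeightDeriv (T p : ℝ) (k : ℕ) (x : ℝ) : ℝ :=
  p * logWeight T (p - 1) k x - k * logWeight T (p - 1) (k - 1) x

noncomputable def logWeightDeriv2 (T p : ℝ) (k : ℕ) (x : ℝ) : ℝ :=
  p * logWeightDeriv T (p - 1) k x - k * logWeightDeriv T (p - 1) (k - 1) x

section LogWeight

variable {T p x : ℝ} {k : ℕ}

theorem logWeight_nonneg (hx : 0 < x) (ht : 0 ≤ T - log x) : 0 ≤ logWeight T p k x := by
  unfold logWeight; positivity

theorem logWeight_pos (hx : 0 < x) (ht : 0 < T - log x) : 0 < logWeight T p k x := by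
  unfold logWeight; positivity

@[simp]
theorem logWeight_zero (T p x : ℝ) : logWeight T p 0 x = x ^ p := by
  simp [logWeight]

theorem logWeight_sub_one_mul (hx : 0 < x) : logWeight T (p - 1) k x * x = logWeight T p k x := by
  rw [logWeight, logWeight, mul_right_comm, ← rpow_add_one hx.ne', sub_add_cancel]

theorem logWeight_succ (T p : ℝ) (k : ℕ) (x : ℝ) :
    logWeight T p (k + 1) x = (T - log x) * logWeight T p k x := by
  rw [logWeight, logWeight, pow_succ]; ring

theorem logWeight_le_logWeight {S : ℝ} (hx : 0 < x) (ht : 0 ≤ T - log x) (hTS : T ≤ S) :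
    logWeight T p k x ≤ logWeight S p k x := by
  unfold logWeight
  gcongr

theorem logWeight_le_pow_mul_logWeight_one (hx : 0 < x) (hx1 : x ≤ 1) (hT : 1 ≤ T) :
    logWeight T p k x ≤ T ^ k * logWeight 1 p k x := by
  have hlog : log x ≤ 0 := log_nonpos hx.le hx1
  have : T - log x ≤ T * (1 - log x) := by nlinarith
  unfold logWeight
  rw [mul_left_comm, ← mul_pow]
  gcongr
  linarith

theorem hasDerivAt_logWeight (hx : 0 < x) :
    HasDerivAt (logWeight T p k) (logWeightDeriv T p k x) x := by
  have hlog : HasDerivAt (fun y => T - log y) (-x⁻¹) x := by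
    simpa using (hasDerivAt_log hx.ne').const_sub T
  refine ((hasDerivAt_rpow_const (Or.inl hx.ne')).fun_mul (hlog.fun_pow k)).congr_deriv ?_
  rw [logWeightDeriv, logWeight, logWeight, rpow_sub_one hx.ne']
  field_simp
  ring

theorem hasDerivAt_logWeightDeriv (hx : 0 < x) :
    HasDerivAt (logWeightDeriv T p k) (logWeightDeriv2 T p k x) x :=
  ((hasDerivAt_logWeight hx).const_mul p).sub ((hasDerivAt_logWeight hx).const_mul (k : ℝ))

theorem eulerOp_logWeight (lam : ℝ) (hx : 0 < x) :
    eulerOp lam x (logWeight T p k x) (logWeightDeriv T p k x) (logWeightDeriv2 T p k x) =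
      ((p ^ 2 + p) / 2 - (1 + lam)) * logWeight T p k x
        - k * (p + 1 / 2) * logWeight T p (k - 1) x
        + k * (k - 1 : ℕ) / 2 * logWeight T p (k - 1 - 1) x := by
  simp only [eulerOp, logWeightDeriv2, logWeightDeriv]
  simp only [← logWeight_sub_one_mul (p := p) hx, ← logWeight_sub_one_mul (p := p - 1) hx]
  ring

end LogWeight

section IndicialRoots

variable {lam : ℝ}

theorem mUp_sq_add_mUp (h : 0 ≤ 9 + 8 * lam) : mUp lam ^ 2 + mUp lam = 2 + 2 * lam := by
  have := sq_sqrt h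
  unfold mUp
  linear_combination this / 4

theorem mDown_sq_add_mDown (h : 0 ≤ 9 + 8 * lam) : mDown lam ^ 2 + mDown lam = 2 + 2 * lam := by
  have := sq_sqrt h
  unfold mDown
  linear_combination this / 4

theorem mUp_pos (h : -1 < lam) : 0 < mUp lam := by
  have : 1 < √(9 + 8 * lam) := by
    rw [lt_sqrt zero_le_one]
    linarith
  unfold mUp
  linarith

theorem mDown_neg (lam : ℝ) : mDown lam < 0 := by
  unfold mDown
  linarith [sqrt_nonneg (9 + 8 * lam)]

end IndicialRoots

theorem natCast_mul_logWeight_pred_le {T p c x : ℝ} {j : ℕ} (hx : 0 < x) (ht : 0 < T - log x)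
    (hj : (j : ℝ) ≤ c * (T - log x)) :
    j * logWeight T p (j - 1) x ≤ c * logWeight T p j x := by
  cases j with
  | zero =>
    have hc : 0 ≤ c := nonneg_of_mul_nonneg_left (by simpa using hj) ht
    simpa using mul_nonneg hc (rpow_pos_of_pos hx p).le
  | succ n =>
    rw [Nat.add_sub_cancel, logWeight_succ, ← mul_assoc]
    exact mul_le_mul_of_nonneg_right hj (logWeight_nonneg hx ht.le)

theorem eulerOp_logWeight_succ_le {lam T p x : ℝ} {j : ℕ} (hp : p ^ 2 + p = 2 + 2 * lam)
    (hx : 0 < x) (ht : 0 < T - log x) (hj : (j : ℝ) ≤ (p + 1 / 2) * (T - log x)) :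
    eulerOp lam x (logWeight T p (j + 1) x) (logWeightDeriv T p (j + 1) x)
        (logWeightDeriv2 T p (j + 1) x) ≤ -((j + 1) * (p + 1 / 2) / 2 * logWeight T p j x) := by
  have hpred := natCast_mul_logWeight_pred_le (p := p) hx ht hj
  rw [eulerOp_logWeight lam hx, hp, Nat.add_sub_cancel]
  push_cast
  linear_combination ((j + 1) / 2 : ℝ) * hpred

theorem le_of_eulerOp_le {lam x₀ M : ℝ} {u u' u'' v v' v'' : ℝ → ℝ} (hlam : -1 < lam)
    (hu : ∀ x ∈ Ioc 0 x₀, HasDerivAt u (u' x) x) (hu' : ∀ x ∈ Ioo 0 x₀, HasDerivAt u' (u'' x) x)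
    (hv : ∀ x ∈ Ioc 0 x₀, HasDerivAt v (v' x) x) (hv' : ∀ x ∈ Ioo 0 x₀, HasDerivAt v' (v'' x) x)
    (hbdd : ∀ x ∈ Ioc 0 x₀, M ≤ u x - v x) (hx₀ : v x₀ ≤ u x₀)
    (hL : ∀ x ∈ Ioo 0 x₀,
      eulerOp lam x (u x) (u' x) (u'' x) ≤ eulerOp lam x (v x) (v' x) (v'' x)) :
    ∀ x ∈ Ioc 0 x₀, v x ≤ u x := by
  intro x hx
  set q := mDown lam
  have hψsol : ∀ y > 0, eulerOp lam y (logWeight 1 q 0 y) (logWeightDeriv 1 q 0 y)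
      (logWeightDeriv2 1 q 0 y) = 0 := fun y hy => by
    rw [eulerOp_logWeight lam hy, mDown_sq_add_mDown (by linarith)]
    push_cast
    ring
  have hperturbed : ∀ ε > 0, ∀ y ∈ Ioc 0 x₀, 0 ≤ u y + ε * logWeight 1 q 0 y - v y := by
    intro ε hε
    refine nonneg_of_secondOrderOp_nonpos
      (w' := fun y => u' y + ε * logWeightDeriv 1 q 0 y - v' y)
      (w'' := fun y => u'' y + ε * logWeightDeriv2 1 q 0 y - v'' y)
      (a₂ := fun y => 1 / 2 * y ^ 2) (a₁ := id) (a₀ := fun _ => 1 + lam)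
      (fun y hy => ((hu y (Ioo_subset_Ioc_self hy)).add
        ((hasDerivAt_logWeight hy.1).const_mul ε)).sub (hv y (Ioo_subset_Ioc_self hy)))
      (fun y hy => ((hu' y hy).add ((hasDerivAt_logWeightDeriv hy.1).const_mul ε)).sub (hv' y hy))
      (fun y hy => (((hu y hy).continuousAt.add
        ((hasDerivAt_logWeight hy.1).continuousAt.const_mul ε)).sub
          (hv y hy).continuousAt).continuousWithinAt)
      (fun y _ => by positivity) (fun _ _ => by linarith) (fun y hy => ?_) ?_ ?_
    · have hψy := hψsol y hy.1
      have hLy := hL y hy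
      unfold eulerOp at hψy hLy
      dsimp only [id]
      linear_combination hLy + ε * hψy
    · have hlim : ∀ᶠ y in 𝓝[>] 0, -M / ε ≤ logWeight 1 q 0 y := by
        simpa only [logWeight_zero] using
          (tendsto_rpow_neg_nhdsGT_zero (mDown_neg lam)).eventually_ge_atTop (-M / ε)
      filter_upwards [hlim, Ioc_mem_nhdsGT (hx.1.trans_le hx.2)] with y hy hyI
      rw [div_le_iff₀' hε] at hy
      linarith [hbdd y hyI]
    · have := rpow_pos_of_pos (hx.1.trans_le hx.2) q
      simp only [logWeight_zero]
      nlinarith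
  refine le_of_forall_pos_le_add fun ε hε => ?_
  have hψ : 0 < x ^ q := rpow_pos_of_pos hx.1 q
  have := hperturbed (ε / x ^ q) (div_pos hε hψ) x hx
  rw [logWeight_zero, div_mul_cancel₀ ε hψ.ne'] at this
  linarith

theorem const_mul_eulerOp_logWeight_le {lam K A T x : ℝ} {j : ℕ} (hlam : -1 < lam)
    (hK : 0 ≤ K) (hA : 2 * K / (mUp lam + 1 / 2) ≤ A) (hT : 1 ≤ T)
    (hjT : j / (mUp lam + 1 / 2) ≤ T) (hx : 0 < x) (hx1 : x ≤ 1) :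
    A * eulerOp lam x (logWeight T (mUp lam) (j + 1) x) (logWeightDeriv T (mUp lam) (j + 1) x)
        (logWeightDeriv2 T (mUp lam) (j + 1) x) ≤ -(K * logWeight 1 (mUp lam) j x) := by
  set m := mUp lam
  set μ := m + 1 / 2
  have hμ : 0 < μ := by
    have : 0 < m := mUp_pos hlam
    positivity
  have hlog : log x ≤ 0 := log_nonpos hx.le hx1
  have ht : 0 < T - log x := by linarith
  have hj : (j : ℝ) ≤ μ * (T - log x) := by
    have : (j : ℝ) ≤ μ * T := (div_le_iff₀' hμ).1 hjT
    nlinarith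
  have hbarrier := eulerOp_logWeight_succ_le (mUp_sq_add_mUp (by linarith)) hx ht hj
  have hφ : 0 ≤ logWeight T m j x := logWeight_nonneg hx ht.le
  have hshift : logWeight 1 m j x ≤ logWeight T m j x :=
    logWeight_le_logWeight hx (by linarith) hT
  have hA0 : 0 ≤ A := (by positivity : 0 ≤ 2 * K / μ).trans hA
  have hAK : K ≤ (j + 1) * μ / 2 * A := by
    have : 2 * K ≤ μ * A := (div_le_iff₀' hμ).1 hA
    nlinarith
  calc _ ≤ A * -((j + 1) * μ / 2 * logWeight T m j x) := mul_le_mul_of_nonneg_left hbarrier hA0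
    _ ≤ -(K * logWeight T m j x) := by nlinarith
    _ ≤ -(K * logWeight 1 m j x) := by nlinarith

theorem le_logWeight_of_neg_le_eulerOp {lam K M x₀ : ℝ} {j : ℕ} {v v' v'' : ℝ → ℝ}
    (hlam : -1 < lam) (hK : 0 ≤ K) (hx₀ : x₀ ∈ Ioc 0 1)
    (hv : ∀ x ∈ Ioc 0 x₀, HasDerivAt v (v' x) x) (hv' : ∀ x ∈ Ioo 0 x₀, HasDerivAt v' (v'' x) x)
    (hvM : ∀ x ∈ Ioc 0 x₀, v x ≤ M)
    (hL : ∀ x ∈ Ioo 0 x₀, -(K * logWeight 1 (mUp lam) j x) ≤ eulerOp lam x (v x) (v' x) (v'' x)) :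
    ∃ C, ∀ x ∈ Ioc 0 x₀, v x ≤ C * logWeight 1 (mUp lam) (j + 1) x := by
  set m := mUp lam
  have hm : 0 < m := mUp_pos hlam
  -- Shifting the logarithm by `T` makes the barrier a supersolution on all of `(0, x₀]`.
  set T := max 1 (j / (m + 1 / 2))
  have hT : 1 ≤ T := le_max_left _ _
  have ht : ∀ x ∈ Ioc 0 x₀, 0 < T - log x := fun x hx => by
    linarith [log_nonpos hx.1.le (hx.2.trans hx₀.2)]
  set φ := logWeight T m (j + 1)
  have hφx₀ : 0 < φ x₀ := logWeight_pos hx₀.1 (ht x₀ ⟨hx₀.1, le_rfl⟩)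
  set A := 2 * K / (m + 1 / 2) + max M 0 / φ x₀
  have hA : 0 ≤ A := by positivity
  have hcomp := le_of_eulerOp_le (M := -M) (u := fun x => A * φ x)
    (u' := fun x => A * logWeightDeriv T m (j + 1) x)
    (u'' := fun x => A * logWeightDeriv2 T m (j + 1) x) hlam
    (fun x hx => (hasDerivAt_logWeight hx.1).const_mul A)
    (fun x hx => (hasDerivAt_logWeightDeriv hx.1).const_mul A) hv hv'
    (fun x hx => by
      have : 0 ≤ φ x := logWeight_nonneg hx.1 (ht x hx).le
      linarith [hvM x hx, mul_nonneg hA this]) ?_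
    (fun x hx => by
      rw [eulerOp_const_mul]
      exact (const_mul_eulerOp_logWeight_le hlam hK (le_add_of_nonneg_right (by positivity)) hT
        (le_max_right _ _) hx.1 (hx.2.le.trans hx₀.2)).trans (hL x hx))
  · refine ⟨A * T ^ (j + 1), fun x hx => (hcomp x hx).trans ?_⟩
    rw [mul_assoc]
    exact mul_le_mul_of_nonneg_left
      (logWeight_le_pow_mul_logWeight_one hx.1 (hx.2.trans hx₀.2) hT) hA
  · calc v x₀ ≤ max M 0 := (hvM x₀ ⟨hx₀.1, le_rfl⟩).trans (le_max_left _ _)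
      _ = max M 0 / φ x₀ * φ x₀ := (div_mul_cancel₀ _ hφx₀.ne').symm
      _ ≤ A * φ x₀ := by gcongr; exact le_add_of_nonneg_left (by positivity)

theorem abs_le_logWeight_of_abs_eulerOp_le {lam K M x₀ : ℝ} {j : ℕ} {v v' v'' : ℝ → ℝ}
    (hlam : -1 < lam) (hK : 0 ≤ K) (hx₀ : x₀ ∈ Ioc 0 1)
    (hv : ∀ x ∈ Ioc 0 x₀, HasDerivAt v (v' x) x) (hv' : ∀ x ∈ Ioo 0 x₀, HasDerivAt v' (v'' x) x)
    (hvM : ∀ x ∈ Ioc 0 x₀, |v x| ≤ M)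
    (hL : ∀ x ∈ Ioo 0 x₀, |eulerOp lam x (v x) (v' x) (v'' x)| ≤ K * logWeight 1 (mUp lam) j x) :
    ∃ C, ∀ x ∈ Ioc 0 x₀, |v x| ≤ C * logWeight 1 (mUp lam) (j + 1) x := by
  obtain ⟨C₁, hC₁⟩ := le_logWeight_of_neg_le_eulerOp hlam hK hx₀ hv hv'
    (fun x hx => (abs_le.1 (hvM x hx)).2) (fun x hx => (abs_le.1 (hL x hx)).1)
  obtain ⟨C₂, hC₂⟩ := le_logWeight_of_neg_le_eulerOp (v := fun x => -v x) hlam hK hx₀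
    (fun x hx => (hv x hx).neg) (fun x hx => (hv' x hx).neg)
    (fun x hx => (neg_le.1 (abs_le.1 (hvM x hx)).1))
    (fun x hx => by rw [eulerOp_neg, neg_le_neg_iff]; exact (abs_le.1 (hL x hx)).2)
  refine ⟨max C₁ C₂, fun x hx => abs_le.2 ?_⟩
  have := logWeight_nonneg (T := 1) (p := mUp lam) (k := j + 1) hx.1
    (by linarith [log_nonpos hx.1.le (hx.2.trans hx₀.2)])
  constructor
  · nlinarith [hC₂ x hx, le_max_right C₁ C₂]
  · nlinarith [hC₁ x hx, le_max_left C₁ C₂]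

theorem euler_decay_transfer_resonant_general (lam : ℝ) (hlam : 0 ≤ lam)
    (x₀ : ℝ) (hx₀ : x₀ ∈ Set.Ioo (0:ℝ) 1)
    (K : ℝ) (hK : 0 < K) (j : ℕ)
    (F v : ℝ → ℝ)
    (hFbd : ∀ x ∈ Set.Ioc (0:ℝ) x₀,
      |F x| ≤ K * x ^ mUp lam * (1 - Real.log x) ^ j)
    (hv1 : ∀ x ∈ Set.Ioc (0:ℝ) x₀, DifferentiableAt ℝ v x)
    (hv2 : ∀ x ∈ Set.Ioc (0:ℝ) x₀, DifferentiableAt ℝ (deriv v) x)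
    (hvbdd : ∃ M : ℝ, ∀ x ∈ Set.Ioc (0:ℝ) x₀, |v x| ≤ M)
    (hode : ∀ x ∈ Set.Ioc (0:ℝ) x₀,
      (1/2) * x^2 * deriv (deriv v) x + x * deriv v x - (1 + lam) * v x = F x) :
    ∃ C' : ℝ, ∀ x ∈ Set.Ioc (0:ℝ) x₀,
      |v x| ≤ C' * x ^ mUp lam * (1 - Real.log x) ^ (j + 1) := by
  obtain ⟨M, hM⟩ := hvbdd
  obtain ⟨C, hC⟩ := abs_le_logWeight_of_abs_eulerOp_le (lam := lam) (j := j) (by linarith) hK.le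
    ⟨hx₀.1, hx₀.2.le⟩ (fun x hx => (hv1 x hx).hasDerivAt)
    (fun x hx => (hv2 x (Ioo_subset_Ioc_self hx)).hasDerivAt) hM fun x hx => by
      rw [eulerOp, hode x (Ioo_subset_Ioc_self hx), logWeight, ← mul_assoc]
      exact hFbd x (Ioo_subset_Ioc_self hx)
  exact ⟨C, fun x hx => by simpa only [logWeight, mul_assoc] using hC x hx⟩

/-- **Decay-transfer estimate (resonant case).** Let `λ ≥ 0`, `x₀ ∈ (0,1)`, `K > 0`,
`j ∈ ℕ`. If `v` is a bounded `C²` solution of `(1/2)x²v'' + x v' - (1+λ)v = F` on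
`(0, x₀]` with `F` continuous and `|F(x)| ≤ K x^{m̄(λ)} (1 - log x)^j`, then
`|v(x)| ≤ C' x^{m̄(λ)} (1 - log x)^{j+1}` on `(0, x₀]` for some constant `C'`. -/
theorem euler_decay_transfer_resonant (lam : ℝ) (hlam : 0 ≤ lam)
    (x₀ : ℝ) (hx₀ : x₀ ∈ Set.Ioo (0:ℝ) 1)
    (K : ℝ) (hK : 0 < K) (j : ℕ)
    (F v : ℝ → ℝ)
    (hF : ContinuousOn F (Set.Ioc 0 x₀))
    (hFbd : ∀ x ∈ Set.Ioc (0:ℝ) x₀,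
      |F x| ≤ K * x ^ mUp lam * (1 - Real.log x) ^ j)
    (hv1 : ∀ x ∈ Set.Ioc (0:ℝ) x₀, DifferentiableAt ℝ v x)
    (hv2 : ∀ x ∈ Set.Ioc (0:ℝ) x₀, DifferentiableAt ℝ (deriv v) x)
    (hv3 : ContinuousOn (deriv (deriv v)) (Set.Ioc 0 x₀))
    (hvbdd : ∃ M : ℝ, ∀ x ∈ Set.Ioc (0:ℝ) x₀, |v x| ≤ M)
    (hode : ∀ x ∈ Set.Ioc (0:ℝ) x₀,
      (1/2) * x^2 * deriv (deriv v) x + x * deriv v x - (1 + lam) * v x = F x) :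
    ∃ C' : ℝ, ∀ x ∈ Set.Ioc (0:ℝ) x₀,
      |v x| ≤ C' * x ^ mUp lam * (1 - Real.log x) ^ (j + 1) :=
  euler_decay_transfer_resonant_general lam hlam x₀ hx₀ K hK j F v hFbd hv1 hv2 hvbdd hode
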